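/- Thresholding the TV solution solves SFM: if w* is the unique minimizer of f(w) − uᵀw + (1/2)‖w‖² over ℝ^n, then A = {i ∈ V : w*_i ≥ 0} is a minimizer of A ↦ F(A) − u(A) over subsets of V. -/
import Mathlib


open Finset

/-- A set function on subsets of `Fin n` is submodular. -/
def Submodular {n : ℕ} (F : Finset (Fin n) → ℝ) : Prop :=
  ∀ A B : Finset (Fin n), F (A ∪ B) + F (A ∩ B) ≤ F A + F B

/-- The Lovász extension of a set function, via a permutation sorting `w` decreasingly. -/
noncomputable def lovasz {n : ℕ} (F : Finset (Fin n) → ℝ) (w : Fin n → ℝ) : ℝ :=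
  let σ := Tuple.sort (fun i => -w i)
  ∑ k : Fin n, w (σ k) *
    (F ((Finset.Iic k).image σ) - F ((Finset.Iio k).image σ))

/-- The base polytope of a set function. -/
def basePolytope {n : ℕ} (F : Finset (Fin n) → ℝ) : Set (Fin n → ℝ) :=
  {s | (∑ i, s i) = F Finset.univ ∧
    ∀ A : Finset (Fin n), (∑ i ∈ A, s i) ≤ F A}

namespace SFMAux

variable {n : ℕ}

/-- prefix set of size `j` under permutation `σ`. -/
def pre (σ : Equiv.Perm (Fin n)) (j : ℕ) : Finset (Fin n) :=
  univ.filter fun i => (σ.symm i : Fin n).val < j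

lemma mem_pre {σ : Equiv.Perm (Fin n)} {j : ℕ} {i : Fin n} :
    i ∈ pre σ j ↔ (σ.symm i).val < j := by simp [pre]

lemma pre_zero (σ : Equiv.Perm (Fin n)) : pre σ 0 = ∅ := by
  ext i; simp [mem_pre]

lemma pre_n (σ : Equiv.Perm (Fin n)) : pre σ n = univ := by
  ext i; simp [mem_pre, (σ.symm i).isLt]

lemma apply_notMem_pre (σ : Equiv.Perm (Fin n)) {j : ℕ} (hj : j < n) :
    σ ⟨j, hj⟩ ∉ pre σ j := by simp [mem_pre]

lemma apply_mem_pre_iff (σ : Equiv.Perm (Fin n)) {j m : ℕ} (hj : j < n) :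
    σ ⟨j, hj⟩ ∈ pre σ m ↔ j < m := by simp [mem_pre]

lemma pre_succ (σ : Equiv.Perm (Fin n)) {j : ℕ} (hj : j < n) :
    pre σ (j + 1) = insert (σ ⟨j, hj⟩) (pre σ j) := by
  ext i
  simp only [mem_pre, mem_insert]
  constructor
  · intro h
    rcases Nat.lt_succ_iff_lt_or_eq.mp h with h | h
    · exact Or.inr h
    · left
      have : σ.symm i = ⟨j, hj⟩ := Fin.ext h
      rw [← this]; simp
  · rintro (rfl | h)
    · simp
    · exact h.trans (Nat.lt_succ_self j)

lemma image_Iic (σ : Equiv.Perm (Fin n)) (k : Fin n) :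
    (Iic k).image σ = pre σ (k.val + 1) := by
  ext i
  simp only [mem_image, mem_Iic, mem_pre]
  constructor
  · rintro ⟨k', hk', rfl⟩
    rw [Equiv.symm_apply_apply]
    exact Nat.lt_succ_of_le (Fin.le_def.mp hk')
  · intro h
    exact ⟨σ.symm i, Fin.le_def.mpr (Nat.lt_succ_iff.mp h), Equiv.apply_symm_apply σ i⟩

lemma image_Iio (σ : Equiv.Perm (Fin n)) (k : Fin n) :
    (Iio k).image σ = pre σ k.val := by
  ext i
  simp only [mem_image, mem_Iio, mem_pre]
  constructor
  · rintro ⟨k', hk', rfl⟩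
    rw [Equiv.symm_apply_apply]
    exact Fin.lt_def.mp hk'
  · intro h
    exact ⟨σ.symm i, Fin.lt_def.mpr h, Equiv.apply_symm_apply σ i⟩

lemma abel (a b : ℕ → ℝ) (m : ℕ) (h0 : b 0 = 0) (hm : a m = 0) :
    ∑ j ∈ range m, a j * (b (j+1) - b j)
      = ∑ j ∈ range m, (a j - a (j+1)) * b (j+1) := by
  have h1 : ∑ j ∈ range m, a (j+1) * b (j+1) = ∑ j ∈ range m, a j * b j := by
    have := Finset.sum_range_succ' (fun j => a j * b j) m
    rw [Finset.sum_range_succ] at this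
    -- this : ∑_{j<m} a j * b j + a m * b m = ∑_{j<m} a (j+1) * b (j+1) + a 0 * b 0
    rw [hm, h0] at this
    simp at this
    linarith [this]
  calc ∑ j ∈ range m, a j * (b (j+1) - b j)
      = ∑ j ∈ range m, (a j * b (j+1) - a j * b j) := by
        apply Finset.sum_congr rfl; intro j _; ring
    _ = ∑ j ∈ range m, a j * b (j+1) - ∑ j ∈ range m, a j * b j := by
        rw [Finset.sum_sub_distrib]
    _ = ∑ j ∈ range m, a j * b (j+1) - ∑ j ∈ range m, a (j+1) * b (j+1) := by rw [h1]
    _ = ∑ j ∈ range m, (a j - a (j+1)) * b (j+1) := by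
        rw [← Finset.sum_sub_distrib]
        apply Finset.sum_congr rfl; intro j _; ring


/-- The `k`-th sorted coordinate of `x` (as a ℕ-indexed sequence, `0` beyond `n`). -/
noncomputable def acoef (x : Fin n → ℝ) (σ : Equiv.Perm (Fin n)) (j : ℕ) : ℝ :=
  if h : j < n then x (σ ⟨j, h⟩) else 0

lemma acoef_val (x : Fin n → ℝ) (σ : Equiv.Perm (Fin n)) (k : Fin n) :
    acoef x σ k.val = x (σ k) := by
  simp [acoef, k.isLt]

lemma acoef_n (x : Fin n → ℝ) (σ : Equiv.Perm (Fin n)) : acoef x σ n = 0 := by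
  simp [acoef]

/-- The Lovász extension written as a sum over `range n` of sorted coordinates times
marginal values of prefixes. -/
lemma lovasz_eq_range (F : Finset (Fin n) → ℝ) (x : Fin n → ℝ) :
    lovasz F x = ∑ j ∈ range n,
      acoef x (Tuple.sort fun i => -x i) j *
        (F (pre (Tuple.sort fun i => -x i) (j+1)) - F (pre (Tuple.sort fun i => -x i) j)) := by
  set σ := Tuple.sort fun i => -x i with hσ
  have h1 : lovasz F x = ∑ k : Fin n, x (σ k) * (F (pre σ (k.val+1)) - F (pre σ k.val)) := by
    rw [lovasz]
    apply Finset.sum_congr rfl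
    intro k _
    rw [image_Iic, image_Iio]
  rw [h1, ← Fin.sum_univ_eq_sum_range
    (fun j => acoef x σ j * (F (pre σ (j+1)) - F (pre σ j))) n]
  apply Finset.sum_congr rfl
  intro k _
  rw [acoef_val]

/-- A dot product written as a sum over `range n` of sorted coordinates times
marginal sums over prefixes. -/
lemma dot_eq_range (s x : Fin n → ℝ) (σ : Equiv.Perm (Fin n)) :
    ∑ i, s i * x i = ∑ j ∈ range n,
      acoef x σ j * ((∑ i ∈ pre σ (j+1), s i) - ∑ i ∈ pre σ j, s i) := by
  have h1 : ∑ i, s i * x i = ∑ k : Fin n, s (σ k) * x (σ k) :=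
    (Equiv.sum_comp σ (fun i => s i * x i)).symm
  have h2 : ∀ k : Fin n, (∑ i ∈ pre σ (k.val+1), s i) - ∑ i ∈ pre σ k.val, s i = s (σ k) := by
    intro k
    rw [pre_succ σ k.isLt, Finset.sum_insert (apply_notMem_pre σ k.isLt)]
    simp
  rw [h1, ← Fin.sum_univ_eq_sum_range
    (fun j => acoef x σ j * ((∑ i ∈ pre σ (j+1), s i) - ∑ i ∈ pre σ j, s i)) n]
  apply Finset.sum_congr rfl
  intro k _
  rw [acoef_val, h2 k]
  ring

/-- Abel-summation identity for the Lovász extension minus a linear form. -/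
lemma abel_lovasz (F : Finset (Fin n) → ℝ) (hF0 : F ∅ = 0) (x s : Fin n → ℝ) :
    lovasz F x - ∑ i, s i * x i
      = ∑ j ∈ range n,
          (acoef x (Tuple.sort fun i => -x i) j - acoef x (Tuple.sort fun i => -x i) (j+1))
          * (F (pre (Tuple.sort fun i => -x i) (j+1))
              - ∑ i ∈ pre (Tuple.sort fun i => -x i) (j+1), s i) := by
  set σ := Tuple.sort fun i => -x i with hσ
  rw [lovasz_eq_range, dot_eq_range s x σ, ← Finset.sum_sub_distrib]
  have h1 : ∀ j ∈ range n,
      acoef x σ j * (F (pre σ (j+1)) - F (pre σ j))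
        - acoef x σ j * ((∑ i ∈ pre σ (j+1), s i) - ∑ i ∈ pre σ j, s i)
      = acoef x σ j * ((fun j => F (pre σ j) - ∑ i ∈ pre σ j, s i) (j+1)
          - (fun j => F (pre σ j) - ∑ i ∈ pre σ j, s i) j) := by
    intro j _; simp only []; ring
  rw [Finset.sum_congr rfl h1,
    abel (acoef x σ) (fun j => F (pre σ j) - ∑ i ∈ pre σ j, s i) n
      (by simp [pre_zero, hF0]) (acoef_n x σ)]

/-- Each Abel term is nonnegative when `s` is in the base polytope. -/
lemma abel_term_nonneg (F : Finset (Fin n) → ℝ) (x s : Fin n → ℝ)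
    (hC : ∀ C : Finset (Fin n), (∑ i ∈ C, s i) ≤ F C) (hU : ∑ i, s i = F univ) :
    ∀ j ∈ range n,
      0 ≤ (acoef x (Tuple.sort fun i => -x i) j - acoef x (Tuple.sort fun i => -x i) (j+1))
          * (F (pre (Tuple.sort fun i => -x i) (j+1))
              - ∑ i ∈ pre (Tuple.sort fun i => -x i) (j+1), s i) := by
  set σ := Tuple.sort fun i => -x i with hσ
  intro j hj
  rw [Finset.mem_range] at hj
  rcases eq_or_lt_of_le (Nat.succ_le_of_lt hj) with h | h
  · -- j + 1 = n : second factor vanishes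
    have : F (pre σ (j+1)) - ∑ i ∈ pre σ (j+1), s i = 0 := by
      rw [show j + 1 = n from h, pre_n, hU]; ring
    rw [this, mul_zero]
  · -- j + 1 < n : both factors nonnegative
    apply mul_nonneg
    · have hm := Tuple.monotone_sort (fun i => -x i)
      have := hm (a := ⟨j, hj⟩) (b := ⟨j+1, h⟩) (by simp [Fin.le_def])
      simp only [Function.comp_apply] at this
      rw [acoef, acoef, dif_pos hj, dif_pos h]
      linarith
    · have := hC (pre σ (j+1))
      linarith

/-- Edmonds' greedy bound: any base-polytope vector is dominated by the Lovász extension. -/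
lemma edmonds (F : Finset (Fin n) → ℝ) (hF0 : F ∅ = 0) (x s : Fin n → ℝ)
    (hC : ∀ C : Finset (Fin n), (∑ i ∈ C, s i) ≤ F C) (hU : ∑ i, s i = F univ) :
    ∑ i, s i * x i ≤ lovasz F x := by
  have h := abel_lovasz F hF0 x s
  have h2 := Finset.sum_nonneg (abel_term_nonneg F x s hC hU)
  linarith


/-- The greedy vector associated with (the sorted order of) `x`. -/
noncomputable def gvec (F : Finset (Fin n) → ℝ) (x : Fin n → ℝ) : Fin n → ℝ :=
  fun i =>
    F (pre (Tuple.sort fun i => -x i) (((Tuple.sort fun i => -x i).symm i).val + 1))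
      - F (pre (Tuple.sort fun i => -x i) ((Tuple.sort fun i => -x i).symm i).val)

lemma gvec_apply (F : Finset (Fin n) → ℝ) (x : Fin n → ℝ) (k : Fin n) :
    gvec F x ((Tuple.sort fun i => -x i) k)
      = F (pre (Tuple.sort fun i => -x i) (k.val + 1))
        - F (pre (Tuple.sort fun i => -x i) k.val) := by
  rw [gvec]; simp

/-- Sum of the greedy vector over any set, reindexed through the sorting permutation. -/
lemma gvec_sum_eq (F : Finset (Fin n) → ℝ) (x : Fin n → ℝ) (C : Finset (Fin n)) :
    ∑ i ∈ C, gvec F x i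
      = ∑ j ∈ range n, (if h : j < n then
          (if (Tuple.sort fun i => -x i) ⟨j, h⟩ ∈ C then
            F (pre (Tuple.sort fun i => -x i) (j+1)) - F (pre (Tuple.sort fun i => -x i) j)
          else 0) else 0) := by
  set σ := Tuple.sort fun i => -x i with hσ
  have h1 : ∑ i ∈ C, gvec F x i = ∑ i : Fin n, if i ∈ C then gvec F x i else 0 := by
    rw [Finset.sum_ite_mem]
    congr 1
    simp
  have h2 : ∑ i : Fin n, (if i ∈ C then gvec F x i else 0)
      = ∑ k : Fin n, if σ k ∈ C then gvec F x (σ k) else 0 :=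
    (Equiv.sum_comp σ (fun i => if i ∈ C then gvec F x i else 0)).symm
  rw [h1, h2, ← Fin.sum_univ_eq_sum_range (fun j => if h : j < n then
          (if σ ⟨j, h⟩ ∈ C then F (pre σ (j+1)) - F (pre σ j) else 0) else 0) n]
  apply Finset.sum_congr rfl
  intro k _
  rw [dif_pos k.isLt]
  by_cases hk : σ k ∈ C
  · rw [if_pos hk, if_pos (show σ ⟨k.val, k.isLt⟩ ∈ C by simpa using hk), gvec_apply]
  · rw [if_neg hk, if_neg (show ¬ σ ⟨k.val, k.isLt⟩ ∈ C by simpa using hk)]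

/-- Greedy feasibility: partial sums are bounded by `F` on intersections with prefixes. -/
lemma greedy_le_aux (F : Finset (Fin n) → ℝ) (hF : Submodular F) (hF0 : F ∅ = 0)
    (σ : Equiv.Perm (Fin n)) (C : Finset (Fin n)) :
    ∀ j, j ≤ n → ∑ k ∈ range j, (if h : k < n then
          (if σ ⟨k, h⟩ ∈ C then F (pre σ (k+1)) - F (pre σ k) else 0) else 0)
        ≤ F (C ∩ pre σ j) := by
  intro j
  induction j with
  | zero => intro _; simp [pre_zero, hF0]
  | succ j ih =>
    intro hj
    have hjn : j < n := hj
    rw [Finset.sum_range_succ, dif_pos hjn]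
    by_cases hc : σ ⟨j, hjn⟩ ∈ C
    · rw [if_pos hc]
      have hins : C ∩ pre σ (j+1) = insert (σ ⟨j, hjn⟩) (C ∩ pre σ j) := by
        rw [pre_succ σ hjn, Finset.inter_insert_of_mem hc]
      have hsub := hF (pre σ j) (insert (σ ⟨j, hjn⟩) (C ∩ pre σ j))
      have hAB : pre σ j ∪ insert (σ ⟨j, hjn⟩) (C ∩ pre σ j) = pre σ (j+1) := by
        rw [pre_succ σ hjn]
        ext i
        simp only [Finset.mem_union, Finset.mem_insert, Finset.mem_inter]
        tauto
      have hint : pre σ j ∩ insert (σ ⟨j, hjn⟩) (C ∩ pre σ j) = C ∩ pre σ j := by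
        ext i
        simp only [Finset.mem_inter, Finset.mem_insert]
        constructor
        · rintro ⟨hi, rfl | hi2⟩
          · exact absurd hi (apply_notMem_pre σ hjn)
          · exact hi2
        · rintro ⟨h1, h2⟩; exact ⟨h2, Or.inr ⟨h1, h2⟩⟩
      rw [hAB, hint] at hsub
      rw [hins]
      have := ih (le_of_lt hjn)
      linarith
    · rw [if_neg hc]
      have : C ∩ pre σ (j+1) = C ∩ pre σ j := by
        rw [pre_succ σ hjn, Finset.inter_insert_of_notMem hc]
      rw [this]
      have := ih (le_of_lt hjn)
      linarith

/-- The greedy vector is in the base polytope: all constraints. -/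
lemma gvec_le (F : Finset (Fin n) → ℝ) (hF : Submodular F) (hF0 : F ∅ = 0)
    (x : Fin n → ℝ) (C : Finset (Fin n)) :
    ∑ i ∈ C, gvec F x i ≤ F C := by
  rw [gvec_sum_eq]
  have := greedy_le_aux F hF hF0 (Tuple.sort fun i => -x i) C n le_rfl
  rwa [pre_n, Finset.inter_univ] at this

/-- The greedy vector is in the base polytope: total sum. -/
lemma gvec_univ (F : Finset (Fin n) → ℝ) (hF0 : F ∅ = 0) (x : Fin n → ℝ) :
    ∑ i, gvec F x i = F univ := by
  have h1 : ∑ i, gvec F x i = ∑ i ∈ univ, gvec F x i := rfl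
  rw [h1, gvec_sum_eq]
  set σ := Tuple.sort fun i => -x i with hσ
  have h2 : ∀ j ∈ range n, (if h : j < n then
          (if σ ⟨j, h⟩ ∈ univ then F (pre σ (j+1)) - F (pre σ j) else 0) else 0)
      = F (pre σ (j+1)) - F (pre σ j) := by
    intro j hj
    rw [Finset.mem_range] at hj
    rw [dif_pos hj, if_pos (Finset.mem_univ _)]
  rw [Finset.sum_congr rfl h2, Finset.sum_range_sub (fun j => F (pre σ j)) n,
    pre_n, pre_zero, hF0, sub_zero]

/-- The greedy vector reproduces the Lovász extension at its own point. -/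
lemma gvec_dot (F : Finset (Fin n) → ℝ) (x : Fin n → ℝ) :
    ∑ i, gvec F x i * x i = lovasz F x := by
  set σ := Tuple.sort fun i => -x i with hσ
  rw [lovasz_eq_range, dot_eq_range (gvec F x) x σ]
  apply Finset.sum_congr rfl
  intro j hj
  rw [Finset.mem_range] at hj
  congr 1
  have e1 : pre σ (j+1) = insert (σ ⟨j, hj⟩) (pre σ j) := pre_succ σ hj
  rw [e1, Finset.sum_insert (apply_notMem_pre σ hj), add_sub_cancel_right, ← e1]
  have := gvec_apply F x ⟨j, hj⟩
  simpa [← hσ] using this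


/-- Level sets of `x` are prefixes of the sorting permutation. -/
lemma levelset_eq_pre (x : Fin n → ℝ) (c : ℝ) :
    univ.filter (fun i => c ≤ x i)
      = pre (Tuple.sort fun i => -x i) (univ.filter (fun i => c ≤ x i)).card := by
  set σ := Tuple.sort fun i => -x i with hσ
  set D := univ.filter (fun i => c ≤ x i) with hD
  set m := D.card with hm
  set S : Finset (Fin n) := univ.filter (fun k => σ k ∈ D) with hS
  have hcard : S.card = m := by
    have : S = D.image σ.symm := by
      ext k
      simp only [hS, Finset.mem_filter, Finset.mem_univ, true_and, Finset.mem_image]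
      constructor
      · intro h; exact ⟨σ k, h, by simp⟩
      · rintro ⟨i, hi, rfl⟩; simpa using hi
    rw [this, Finset.card_image_of_injective _ σ.symm.injective]
  have hdown : ∀ k k' : Fin n, k ≤ k' → k' ∈ S → k ∈ S := by
    intro k k' hkk' hk'
    simp only [hS, hD, Finset.mem_filter, Finset.mem_univ, true_and] at hk' ⊢
    have hmono := Tuple.monotone_sort (fun i => -x i) hkk'
    simp only [Function.comp_apply] at hmono
    rw [← hσ] at hmono
    linarith
  have hiff : ∀ k : Fin n, k ∈ S ↔ k.val < m := by
    intro k
    constructor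
    · intro hk
      have hsub : Finset.Iic k ⊆ S := fun k' hk' =>
        hdown k' k (Finset.mem_Iic.mp hk') hk
      have := Finset.card_le_card hsub
      rw [Fin.card_Iic, hcard] at this
      omega
    · intro hk
      by_contra hns
      have hsub : S ⊆ Finset.Iio k := by
        intro k' hk'
        rw [Finset.mem_Iio]
        by_contra hge
        exact hns (hdown k k' (le_of_not_gt hge) hk')
      have := Finset.card_le_card hsub
      rw [Fin.card_Iio, hcard] at this
      omega
  ext i
  rw [mem_pre]
  have := hiff (σ.symm i)
  simp only [hS, Finset.mem_filter, Finset.mem_univ, true_and, Equiv.apply_symm_apply] at this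
  rw [← this]

/-- A helper: summing marginals up to `m ≤ n` telescopes. -/
lemma range_telescope (F : Finset (Fin n) → ℝ) (hF0 : F ∅ = 0) (σ : Equiv.Perm (Fin n))
    {m : ℕ} (hm : m ≤ n) :
    ∑ j ∈ range n, (if j < m then F (pre σ (j+1)) - F (pre σ j) else 0) = F (pre σ m) := by
  have h1 : (∑ j ∈ range n, if j < m then F (pre σ (j+1)) - F (pre σ j) else 0)
      = ∑ j ∈ (range n).filter (· < m), (F (pre σ (j+1)) - F (pre σ j)) :=
    (Finset.sum_filter _ _).symm
  have h2 : (range n).filter (· < m) = range m := by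
    ext j; simp only [Finset.mem_filter, Finset.mem_range]; omega
  rw [h1, h2, Finset.sum_range_sub (fun j => F (pre σ j)) m, pre_zero, hF0, sub_zero]

/-- The Lovász extension of an indicator function. -/
lemma lovasz_indicator (F : Finset (Fin n) → ℝ) (hF0 : F ∅ = 0) (C : Finset (Fin n)) :
    lovasz F (fun i => if i ∈ C then (1:ℝ) else 0) = F C := by
  set x : Fin n → ℝ := fun i => if i ∈ C then (1:ℝ) else 0 with hx
  set σ := Tuple.sort fun i => -x i with hσ
  have hfil : univ.filter (fun i => (1:ℝ) ≤ x i) = C := by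
    ext i
    simp only [Finset.mem_filter, Finset.mem_univ, true_and, hx]
    by_cases h : i ∈ C <;> simp [h]
  have hCpre : C = pre σ C.card := by
    have := levelset_eq_pre x 1
    rwa [hfil, ← hσ] at this
  have hmn : C.card ≤ n := by
    have := Finset.card_le_card (Finset.subset_univ C)
    simpa using this
  rw [lovasz_eq_range, ← hσ]
  have h1 : ∀ j ∈ range n, acoef x σ j * (F (pre σ (j+1)) - F (pre σ j))
      = (if j < C.card then F (pre σ (j+1)) - F (pre σ j) else 0) := by
    intro j hj
    rw [Finset.mem_range] at hj
    have hax : acoef x σ j = if j < C.card then 1 else 0 := by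
      rw [acoef, dif_pos hj, hx]
      have : σ ⟨j, hj⟩ ∈ C ↔ j < C.card := by
        conv_lhs => rw [hCpre]
        exact apply_mem_pre_iff σ hj
      by_cases h : j < C.card
      · rw [if_pos h]; simp only []; rw [if_pos (this.mpr h)]
      · rw [if_neg h]; simp only []; rw [if_neg (fun hc => h (this.mp hc))]
    rw [hax]
    by_cases h : j < C.card <;> simp [h]
  rw [Finset.sum_congr rfl h1, range_telescope F hF0 σ hmn, ← hCpre]

/-- The Lovász extension of a constant function. -/
lemma lovasz_const (F : Finset (Fin n) → ℝ) (hF0 : F ∅ = 0) (c : ℝ) :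
    lovasz F (fun _ => c) = c * F univ := by
  set x : Fin n → ℝ := fun _ => c with hx
  set σ := Tuple.sort fun i => -x i with hσ
  rw [lovasz_eq_range, ← hσ]
  have h1 : ∀ j ∈ range n, acoef x σ j * (F (pre σ (j+1)) - F (pre σ j))
      = c * (F (pre σ (j+1)) - F (pre σ j)) := by
    intro j hj
    rw [Finset.mem_range] at hj
    rw [acoef, dif_pos hj]
  rw [Finset.sum_congr rfl h1, ← Finset.mul_sum,
    Finset.sum_range_sub (fun j => F (pre σ j)) n, pre_n, pre_zero, hF0, sub_zero]


section Opt

variable {F : Finset (Fin n) → ℝ} (hF : Submodular F) (hF0 : F ∅ = 0)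
  {u w : Fin n → ℝ}
  (hw : ∀ w' : Fin n → ℝ,
      lovasz F w - (∑ i, u i * w i) + (1/2) * ∑ i, (w i)^2
        ≤ lovasz F w' - (∑ i, u i * w' i) + (1/2) * ∑ i, (w' i)^2)

include hF hF0 hw

/-- First-order optimality: `u - w` is a subgradient at the origin scale, i.e.
`(u - w) · d ≤ f(d)` for all `d`. -/
lemma opt_subgrad (d : Fin n → ℝ) : ∑ i, (u i - w i) * d i ≤ lovasz F d := by
  have key : ∀ t : ℝ, 0 < t →
      ∑ i, (u i - w i) * d i ≤ lovasz F d + t / 2 * ∑ i, (d i)^2 := by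
    intro t ht
    set y : Fin n → ℝ := fun i => w i + t * d i with hy
    have hspec := hw y
    set s := gvec F y with hs
    have hC := gvec_le F hF hF0 y
    have hU := gvec_univ F hF0 y
    have hdot : lovasz F y = ∑ i, s i * y i := (gvec_dot F y).symm
    have h1 : ∑ i, s i * w i ≤ lovasz F w := edmonds F hF0 w s hC hU
    have h2 : ∑ i, s i * d i ≤ lovasz F d := edmonds F hF0 d s hC hU
    have h3 : ∑ i, s i * y i = ∑ i, s i * w i + t * ∑ i, s i * d i := by
      rw [Finset.mul_sum, ← Finset.sum_add_distrib]
      apply Finset.sum_congr rfl; intro i _; simp only [hy]; ring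
    have h4 : ∑ i, u i * y i = ∑ i, u i * w i + t * ∑ i, u i * d i := by
      rw [Finset.mul_sum, ← Finset.sum_add_distrib]
      apply Finset.sum_congr rfl; intro i _; simp only [hy]; ring
    have h5 : ∑ i, (y i)^2
        = ∑ i, (w i)^2 + (2 * t * ∑ i, w i * d i + t^2 * ∑ i, (d i)^2) := by
      rw [Finset.mul_sum, Finset.mul_sum, ← Finset.sum_add_distrib, ← Finset.sum_add_distrib]
      apply Finset.sum_congr rfl; intro i _; simp only [hy]; ring
    have h6 : ∑ i, (u i - w i) * d i = ∑ i, u i * d i - ∑ i, w i * d i := by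
      rw [← Finset.sum_sub_distrib]
      apply Finset.sum_congr rfl; intro i _; ring
    have hle : lovasz F y ≤ lovasz F w + t * lovasz F d := by
      rw [hdot, h3]
      have := mul_le_mul_of_nonneg_left h2 (le_of_lt ht)
      linarith
    have h7 : 0 ≤ t * (lovasz F d + t / 2 * ∑ i, (d i)^2
        - (∑ i, u i * d i - ∑ i, w i * d i)) := by nlinarith [hspec, hle]
    have h8 := (mul_nonneg_iff_of_pos_left ht).mp h7
    linarith
  by_contra hcon
  push_neg at hcon
  set D2 := ∑ i, (d i)^2 with hD2def
  have hD2 : 0 ≤ D2 := Finset.sum_nonneg (fun i _ => sq_nonneg _)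
  set ε := ∑ i, (u i - w i) * d i - lovasz F d with hε
  have hεpos : 0 < ε := by simp only [hε]; linarith
  have hkey := key (ε / (D2 + 1)) (by positivity)
  have ht1 : ε / (D2 + 1) * (D2 + 1) = ε := div_mul_cancel₀ _ (by positivity)
  have htpos : 0 < ε / (D2 + 1) := by positivity
  nlinarith [hkey, ht1, htpos, hD2]

/-- First-order optimality: the objective value identity direction. -/
lemma opt_eq_le : lovasz F w ≤ ∑ i, (u i - w i) * w i := by
  have key : ∀ t : ℝ, 0 < t → t ≤ 1 →
      lovasz F w ≤ ∑ i, (u i - w i) * w i + t / 2 * ∑ i, (w i)^2 := by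
    intro t ht ht1
    set y : Fin n → ℝ := fun i => (1 - t) * w i with hy
    have hspec := hw y
    set s := gvec F y with hs
    have hC := gvec_le F hF hF0 y
    have hU := gvec_univ F hF0 y
    have hdot : lovasz F y = ∑ i, s i * y i := (gvec_dot F y).symm
    have h1 : ∑ i, s i * w i ≤ lovasz F w := edmonds F hF0 w s hC hU
    have h2 : ∑ i, s i * y i = (1 - t) * ∑ i, s i * w i := by
      rw [Finset.mul_sum]
      apply Finset.sum_congr rfl; intro i _; simp only [hy]; ring
    have hle : lovasz F y ≤ (1 - t) * lovasz F w := by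
      rw [hdot, h2]
      exact mul_le_mul_of_nonneg_left h1 (by linarith)
    have h4 : ∑ i, u i * y i = (1 - t) * ∑ i, u i * w i := by
      rw [Finset.mul_sum]
      apply Finset.sum_congr rfl; intro i _; simp only [hy]; ring
    have h5 : ∑ i, (y i)^2 = (1 - t)^2 * ∑ i, (w i)^2 := by
      rw [Finset.mul_sum]
      apply Finset.sum_congr rfl; intro i _; simp only [hy]; ring
    have h6 : ∑ i, (u i - w i) * w i = ∑ i, u i * w i - ∑ i, (w i)^2 := by
      rw [← Finset.sum_sub_distrib]
      apply Finset.sum_congr rfl; intro i _; ring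
    have h7 : 0 ≤ t * (∑ i, (u i - w i) * w i + t / 2 * ∑ i, (w i)^2 - lovasz F w) := by
      nlinarith [hspec, hle]
    have h8 := (mul_nonneg_iff_of_pos_left ht).mp h7
    linarith
  by_contra hcon
  push_neg at hcon
  set S2 := ∑ i, (w i)^2 with hS2def
  have hS2 : 0 ≤ S2 := Finset.sum_nonneg (fun i _ => sq_nonneg _)
  set ε := lovasz F w - ∑ i, (u i - w i) * w i with hε
  have hεpos : 0 < ε := by simp only [hε]; linarith
  rcases le_total (ε / (S2 + 1)) 1 with hle1 | hle1
  · have hkey := key (ε / (S2 + 1)) (by positivity) hle1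
    have ht1 : ε / (S2 + 1) * (S2 + 1) = ε := div_mul_cancel₀ _ (by positivity)
    have htpos : 0 < ε / (S2 + 1) := by positivity
    nlinarith [hkey, ht1, htpos, hS2]
  · have hε1 : S2 + 1 ≤ ε := by
      have := (le_div_iff₀ (by positivity : (0:ℝ) < S2 + 1)).mp hle1
      linarith
    have hkey := key 1 one_pos le_rfl
    nlinarith [hkey, hε1, hS2]

end Opt

end SFMAux

open SFMAux in
/-- Thresholding the TV solution at zero solves submodular function minimization. -/
theorem threshold_tv_solves_sfm {n : ℕ} (F : Finset (Fin n) → ℝ)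
    (hF : Submodular F) (hF0 : F ∅ = 0) (u : Fin n → ℝ)
    (w : Fin n → ℝ)
    (hw : ∀ w' : Fin n → ℝ,
      lovasz F w - (∑ i, u i * w i) + (1/2) * ∑ i, (w i)^2
        ≤ lovasz F w' - (∑ i, u i * w' i) + (1/2) * ∑ i, (w' i)^2) :
    ∀ B : Finset (Fin n),
      F (Finset.univ.filter fun i => 0 ≤ w i)
          - (∑ i ∈ Finset.univ.filter fun i => 0 ≤ w i, u i)
        ≤ F B - ∑ i ∈ B, u i := by
  intro B
  classical
  set s : Fin n → ℝ := fun i => u i - w i with hsdef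
  -- base polytope membership of s = u - w
  have hC : ∀ C : Finset (Fin n), ∑ i ∈ C, s i ≤ F C := by
    intro C
    have h1 := opt_subgrad hF hF0 hw (fun i => if i ∈ C then (1:ℝ) else 0)
    rw [lovasz_indicator F hF0 C] at h1
    have h2 : ∑ i, (u i - w i) * (if i ∈ C then (1:ℝ) else 0) = ∑ i ∈ C, s i := by
      simp only [mul_ite, mul_one, mul_zero, Finset.sum_ite_mem, Finset.univ_inter, hsdef]
    rwa [h2] at h1
  have hU : ∑ i, s i = F univ := by
    have h1 := opt_subgrad hF hF0 hw (fun _ => (-1 : ℝ))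
    rw [lovasz_const F hF0 (-1)] at h1
    have h2 : ∑ i, (u i - w i) * (-1 : ℝ) = -∑ i, s i := by
      rw [← Finset.sum_neg_distrib]
      apply Finset.sum_congr rfl; intro i _; simp only [hsdef]; ring
    rw [h2] at h1
    have h3 := hC univ
    have h4 : ∑ i ∈ univ, s i = ∑ i, s i := rfl
    rw [h4] at h3
    linarith
  have heq : lovasz F w = ∑ i, s i * w i :=
    le_antisymm (opt_eq_le hF hF0 hw) (opt_subgrad hF hF0 hw w)
  set σ := Tuple.sort (fun i => -w i) with hσ
  -- all Abel terms vanish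
  have habel := abel_lovasz F hF0 w s
  rw [← hσ] at habel
  have hzero : ∑ j ∈ range n,
      (acoef w σ j - acoef w σ (j+1)) * (F (pre σ (j+1)) - ∑ i ∈ pre σ (j+1), s i) = 0 := by
    rw [← habel, heq]; ring
  have hnn := abel_term_nonneg F w s hC hU
  rw [← hσ] at hnn
  have hterm0 := (Finset.sum_eq_zero_iff_of_nonneg hnn).mp hzero
  -- the threshold set is a prefix
  set A := Finset.univ.filter (fun i => 0 ≤ w i) with hA
  have hApre : A = pre σ A.card := by
    have := levelset_eq_pre w 0
    rwa [← hσ, ← hA] at this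
  set m := A.card with hm
  have hmn : m ≤ n := by
    have := Finset.card_le_univ A
    simpa using this
  -- tightness of s on A
  have htight : F A = ∑ i ∈ A, s i := by
    rcases Nat.eq_zero_or_pos m with h0 | hpos
    · have hAe : A = ∅ := Finset.card_eq_zero.mp h0
      rw [hAe, hF0, Finset.sum_empty]
    rcases eq_or_lt_of_le hmn with hn | hlt
    · have hAu : A = univ := by rw [hApre, hn, pre_n]
      rw [hAu, ← hU]
    · have hj : m - 1 ∈ range n := Finset.mem_range.mpr (by omega)
      have ht := hterm0 (m - 1) hj
      have hsucc : m - 1 + 1 = m := Nat.succ_pred_eq_of_pos hpos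
      rw [hsucc] at ht
      have hj1 : m - 1 < n := by omega
      have ha1 : acoef w σ (m - 1) = w (σ ⟨m - 1, hj1⟩) := by rw [acoef, dif_pos hj1]
      have ha2 : acoef w σ m = w (σ ⟨m, hlt⟩) := by rw [acoef, dif_pos hlt]
      have hmem1 : σ ⟨m - 1, hj1⟩ ∈ A := by
        rw [hApre]
        exact (apply_mem_pre_iff σ hj1).mpr (by omega)
      have hge : 0 ≤ w (σ ⟨m - 1, hj1⟩) := (Finset.mem_filter.mp hmem1).2
      have hmem2 : σ ⟨m, hlt⟩ ∉ A := by
        rw [hApre]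
        intro h
        exact absurd ((apply_mem_pre_iff σ hlt).mp h) (lt_irrefl m)
      have hneg : w (σ ⟨m, hlt⟩) < 0 := by
        by_contra hcon
        push_neg at hcon
        exact hmem2 (by rw [hA]; exact Finset.mem_filter.mpr ⟨Finset.mem_univ _, hcon⟩)
      have hfac : 0 < acoef w σ (m - 1) - acoef w σ m := by
        rw [ha1, ha2]; linarith
      rcases mul_eq_zero.mp ht with h | h
      · exact absurd h (ne_of_gt hfac)
      · rw [hApre]
        linarith [sub_eq_zero.mp h]
  -- final chain
  have hsA : ∑ i ∈ A, s i - ∑ i ∈ A, u i = ∑ i ∈ A, (-(w i)) := by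
    rw [← Finset.sum_sub_distrib]
    apply Finset.sum_congr rfl; intro i _; simp only [hsdef]; ring
  have hsB : ∑ i ∈ B, s i - ∑ i ∈ B, u i = ∑ i ∈ B, (-(w i)) := by
    rw [← Finset.sum_sub_distrib]
    apply Finset.sum_congr rfl; intro i _; simp only [hsdef]; ring
  have h1 : ∑ i ∈ A ∩ B, w i ≤ ∑ i ∈ A, w i := by
    apply Finset.sum_le_sum_of_subset_of_nonneg Finset.inter_subset_left
    intro i hi _
    exact (Finset.mem_filter.mp hi).2
  have h2 : ∑ i ∈ A ∩ B, (-(w i)) ≤ ∑ i ∈ B, (-(w i)) := by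
    apply Finset.sum_le_sum_of_subset_of_nonneg Finset.inter_subset_right
    intro i hi hni
    have hiA : i ∉ A := fun hmemA => hni (Finset.mem_inter.mpr ⟨hmemA, hi⟩)
    have : ¬ (0 ≤ w i) := by
      intro hcon
      exact hiA (by rw [hA]; exact Finset.mem_filter.mpr ⟨Finset.mem_univ _, hcon⟩)
    linarith
  have h3 : ∑ i ∈ A, (-(w i)) = -∑ i ∈ A, w i := by rw [Finset.sum_neg_distrib]
  have h4 : ∑ i ∈ A ∩ B, (-(w i)) = -∑ i ∈ A ∩ B, w i := by rw [Finset.sum_neg_distrib]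
  have h5 := hC B
  -- F A - u(A) = ∑_A (-w) ≤ ∑_B (-w) = ∑_B s - u(B) ≤ F B - u(B)
  calc F A - ∑ i ∈ A, u i = ∑ i ∈ A, (-(w i)) := by rw [htight]; exact hsA
    _ ≤ ∑ i ∈ B, (-(w i)) := by linarith
    _ = ∑ i ∈ B, s i - ∑ i ∈ B, u i := hsB.symm
    _ ≤ F B - ∑ i ∈ B, u i := by linarith
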